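/- Let X = ∑ x_i where x_i are independent symmetric (around 0) random variables with |x_i| ≤ a_i almost surely, and let F(t) = Pr[X > t]. Set m = 2·max_i a_i. Then for every t ≥ 0 and δ > 0, letting l = 1 + ⌊t/δ⌋, we have F(t+δ+m)^l ≤ 2·F(t)^(l+1). -/

import Mathlib

/-!
Reflection coupling. Let `(Y, Z)` be two independent copies of `(x_i)` and
`D_k = ∑_{i<k} (Y_i - Z_i)`. On `{∑ Y > A + δ + m, ∑ Z > B}`, swap `Y_i` and `Z_i` for all
`i ≥ k`, where `k` is the first time with `D_k ≥ δ`. The swap preserves the joint law, and since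
each increment is at most `m` we have `D_k < δ + m`, so the swapped pair lies in
`{∑ Y > B + δ, ∑ Z > A}` (if `D` never reaches `δ`, the pair is already there). Hence
`F(A + δ + m) F(B) ≤ F(B + δ) F(A)` for `B ≤ A + m`. Applying this with `A = t` and
`B = t - jδ` for `j = l, …, 1` gives `F(t + δ + m)^l F(t - lδ) ≤ F(t)^(l+1)`, and
`F(t - lδ) ≥ 1/2` because `t - lδ < 0` and the sum is symmetric.
-/

open MeasureTheory ProbabilityTheory Finset

section Reflection

variable {n : ℕ}

def tailSwap {α : Type*} (k : ℕ) (w : Fin n → α × α) : Fin n → α × α :=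
  fun i => if k ≤ (i : ℕ) then (w i).swap else w i

def jointTail (α β : ℝ) : Set (Fin n → ℝ × ℝ) :=
  {w | α < ∑ i, (w i).1 ∧ β < ∑ i, (w i).2}

def partialDiff (k : ℕ) (w : Fin n → ℝ × ℝ) : ℝ :=
  ∑ i ∈ univ.filter (fun i : Fin n => (i : ℕ) < k), ((w i).1 - (w i).2)

/-- `crossingAt δ k` for `k ≤ n`: the partial differences first reach `δ` at time `k`;
`crossingAt δ (n + 1)`: they never reach `δ`. -/
def crossingAt (δ : ℝ) (k : ℕ) : Set (Fin n → ℝ × ℝ) :=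
  {w | (k ≤ n → δ ≤ partialDiff k w) ∧ ∀ j < k, partialDiff j w < δ}

@[simp]
lemma partialDiff_zero (w : Fin n → ℝ × ℝ) : partialDiff 0 w = 0 := by
  simp [partialDiff]

lemma partialDiff_succ {k : ℕ} (hk : k < n) (w : Fin n → ℝ × ℝ) :
    partialDiff (k + 1) w = partialDiff k w + ((w ⟨k, hk⟩).1 - (w ⟨k, hk⟩).2) := by
  have : univ.filter (fun i : Fin n => (i : ℕ) < k + 1) =
      insert ⟨k, hk⟩ (univ.filter (fun i : Fin n => (i : ℕ) < k)) := by
    ext i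
    simp only [mem_filter, mem_univ, true_and, mem_insert, Fin.ext_iff]
    omega
  rw [partialDiff, this, sum_insert (by simp), add_comm]
  rfl

lemma partialDiff_of_le {k : ℕ} (hk : n ≤ k) (w : Fin n → ℝ × ℝ) :
    partialDiff k w = ∑ i, (w i).1 - ∑ i, (w i).2 := by
  rw [partialDiff, filter_true_of_mem fun i _ => by omega, sum_sub_distrib]

lemma partialDiff_tailSwap {j k : ℕ} (hjk : j ≤ k) (w : Fin n → ℝ × ℝ) :
    partialDiff j (tailSwap k w) = partialDiff j w := by
  refine sum_congr rfl fun i hi => ?_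
  have : ¬ k ≤ (i : ℕ) := by simp at hi; omega
  simp [tailSwap, this]

lemma sum_fst_tailSwap (k : ℕ) (w : Fin n → ℝ × ℝ) :
    ∑ i, (tailSwap k w i).1 = ∑ i, (w i).2 + partialDiff k w := by
  rw [partialDiff, sum_filter, ← sum_add_distrib]
  refine sum_congr rfl fun i _ => ?_
  by_cases h : k ≤ (i : ℕ)
  · simp [tailSwap, h]
  · simp [tailSwap, h, not_le.mp h]

lemma sum_snd_tailSwap (k : ℕ) (w : Fin n → ℝ × ℝ) :
    ∑ i, (tailSwap k w i).2 = ∑ i, (w i).1 - partialDiff k w := by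
  rw [partialDiff, sum_filter, ← sum_sub_distrib]
  refine sum_congr rfl fun i _ => ?_
  by_cases h : k ≤ (i : ℕ)
  · simp [tailSwap, h, not_lt.mpr h]
  · simp [tailSwap, h, not_le.mp h]

lemma measurable_partialDiff (k : ℕ) : Measurable (partialDiff (n := n) k) := by
  unfold partialDiff
  fun_prop

lemma measurableSet_crossingAt (δ : ℝ) (k : ℕ) :
    MeasurableSet (crossingAt (n := n) δ k) := by
  simp only [crossingAt, Set.ofPred_and, Set.ofPred_forall]
  exact (MeasurableSet.iInter fun _ =>
      measurableSet_le measurable_const (measurable_partialDiff k)).inter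
    (.iInter fun j => .iInter fun _ => measurableSet_lt (measurable_partialDiff j) measurable_const)

lemma pairwiseDisjoint_crossingAt (δ : ℝ) :
    (range (n + 2) : Set ℕ).PairwiseDisjoint (crossingAt (n := n) δ) := by
  intro j hj k hk hjk
  simp only [coe_range, Set.mem_Iio] at hj hk
  rcases lt_or_gt_of_ne hjk with h | h
  · exact Set.disjoint_left.mpr fun _ hwj hwk => (hwk.2 j h).not_ge (hwj.1 (by omega))
  · exact Set.disjoint_left.mpr fun _ hwj hwk => (hwj.2 k h).not_ge (hwk.1 (by omega))

lemma exists_mem_crossingAt (δ : ℝ) (w : Fin n → ℝ × ℝ) :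
    ∃ k ∈ range (n + 2), w ∈ crossingAt δ k := by
  classical
  have hex : ∃ k, k ≤ n → δ ≤ partialDiff k w := ⟨n + 1, by omega⟩
  refine ⟨Nat.find hex, mem_range.mpr (Nat.lt_succ_of_le (Nat.find_min' hex (by omega))),
    Nat.find_spec hex, fun j hj => ?_⟩
  have := Nat.find_min hex hj
  push Not at this
  exact this.2

lemma tailSwap_mem_crossingAt {δ : ℝ} {k : ℕ} {w : Fin n → ℝ × ℝ}
    (hw : w ∈ crossingAt δ k) : tailSwap k w ∈ crossingAt δ k := by
  refine ⟨?_, fun j hj => ?_⟩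
  · rw [partialDiff_tailSwap le_rfl]; exact hw.1
  · rw [partialDiff_tailSwap hj.le]; exact hw.2 j hj

lemma partialDiff_lt_of_mem_crossingAt {δ m : ℝ} (hδ : 0 < δ) {k : ℕ} (hk : k ≤ n)
    {w : Fin n → ℝ × ℝ} (hm : ∀ i, (w i).1 - (w i).2 ≤ m) (hw : w ∈ crossingAt δ k) :
    partialDiff k w < δ + m := by
  obtain _ | k := k
  · simp [crossingAt] at hw; linarith
  rw [partialDiff_succ hk]
  linarith [hw.2 k k.lt_succ_self, hm ⟨k, hk⟩]

lemma measurableSet_jointTail (α β : ℝ) : MeasurableSet (jointTail (n := n) α β) := by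
  simp only [jointTail, Set.ofPred_and]
  exact (measurableSet_lt measurable_const (by fun_prop)).inter
    (measurableSet_lt measurable_const (by fun_prop))

lemma tailSwap_mem_jointTail {m A B δ : ℝ} (hδ : 0 < δ) (hm : 0 ≤ m) (hBA : B ≤ A + m)
    {k : ℕ} {w : Fin n → ℝ × ℝ} (hincr : ∀ i, (w i).1 - (w i).2 ≤ m)
    (hwk : w ∈ crossingAt δ k) (hw : w ∈ jointTail (A + δ + m) B) :
    tailSwap k w ∈ jointTail (B + δ) A := by
  obtain ⟨hY, hZ⟩ := hw
  simp only [jointTail, Set.mem_ofPred_eq, sum_fst_tailSwap, sum_snd_tailSwap]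
  rcases Nat.lt_or_ge n k with hnk | hkn
  · -- no crossing: `tailSwap k` is the identity and `w` itself lies in the target
    have hD := hwk.2 n hnk
    rw [partialDiff_of_le le_rfl] at hD
    rw [partialDiff_of_le hnk.le]
    constructor <;> linarith
  · have hD := partialDiff_lt_of_mem_crossingAt hδ hkn hincr hwk
    have hD' := hwk.1 hkn
    constructor <;> linarith

theorem measure_jointTail_le (π : Measure (Fin n → ℝ × ℝ))
    (hswap : ∀ k, MeasurePreserving (tailSwap k) π π) {m : ℝ} (hm : 0 ≤ m)
    (hincr : ∀ᵐ w ∂π, ∀ i, (w i).1 - (w i).2 ≤ m) {A B δ : ℝ} (hδ : 0 < δ)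
    (hBA : B ≤ A + m) :
    π (jointTail (A + δ + m) B) ≤ π (jointTail (B + δ) A) := by
  set E := jointTail (n := n) (A + δ + m) B
  set E' := jointTail (n := n) (B + δ) A
  set G := {w : Fin n → ℝ × ℝ | ∀ i, (w i).1 - (w i).2 ≤ m}
  have hmeas : ∀ k, MeasurableSet (E' ∩ crossingAt δ k) := fun k =>
    (measurableSet_jointTail _ _).inter (measurableSet_crossingAt δ k)
  have hcover : E ≤ᵐ[π] ⋃ k ∈ range (n + 2), E ∩ G ∩ crossingAt δ k := by
    filter_upwards [hincr] with w hwG hwE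
    obtain ⟨k, hk, hwk⟩ := exists_mem_crossingAt δ w
    exact Set.mem_biUnion hk ⟨⟨hwE, hwG⟩, hwk⟩
  have hstep : ∀ k, E ∩ G ∩ crossingAt δ k ⊆ tailSwap k ⁻¹' (E' ∩ crossingAt δ k) :=
    fun k w ⟨⟨hwE, hwG⟩, hwk⟩ =>
      ⟨tailSwap_mem_jointTail hδ hm hBA hwG hwk hwE, tailSwap_mem_crossingAt hwk⟩
  calc π E ≤ π (⋃ k ∈ range (n + 2), E ∩ G ∩ crossingAt δ k) := measure_mono_ae hcover
    _ ≤ ∑ k ∈ range (n + 2), π (E ∩ G ∩ crossingAt δ k) := measure_biUnion_finset_le _ _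
    _ ≤ ∑ k ∈ range (n + 2), π (E' ∩ crossingAt δ k) := by
        refine sum_le_sum fun k _ => ?_
        rw [← (hswap k).measure_preimage (hmeas k).nullMeasurableSet]
        exact measure_mono (hstep k)
    _ = π (⋃ k ∈ range (n + 2), E' ∩ crossingAt δ k) :=
        (measure_biUnion_finset ((pairwiseDisjoint_crossingAt δ).mono
          fun _ => Set.inter_subset_right) fun k _ => hmeas k).symm
    _ ≤ π E' := measure_mono (Set.iUnion₂_subset fun k _ => Set.inter_subset_left)

lemma measurePreserving_tailSwap {α : Type*} [MeasurableSpace α] (ν : Fin n → Measure α)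
    [∀ i, SigmaFinite (ν i)] (k : ℕ) :
    MeasurePreserving (tailSwap k) (Measure.pi fun i => (ν i).prod (ν i))
      (Measure.pi fun i => (ν i).prod (ν i)) :=
  measurePreserving_pi _ _
    (f := fun (i : Fin n) (p : α × α) => if k ≤ (i : ℕ) then p.swap else p)
    fun i => by
      by_cases h : k ≤ (i : ℕ)
      · simp only [h, if_true]; exact Measure.measurePreserving_swap
      · simp only [h, if_false]; exact MeasurePreserving.id _

lemma ae_sub_le_of_ae_abs_le (ν : Fin n → Measure ℝ) [∀ i, SigmaFinite (ν i)]
    {a : Fin n → ℝ} (hν : ∀ i, ∀ᵐ r ∂ν i, |r| ≤ a i) {m : ℝ}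
    (ham : ∀ i, 2 * a i ≤ m) :
    ∀ᵐ w ∂Measure.pi (fun i => (ν i).prod (ν i)), ∀ i, (w i).1 - (w i).2 ≤ m := by
  refine ae_all_iff.mpr fun i =>
    (Measure.tendsto_eval_ae_ae (i := i) (μ := fun i => (ν i).prod (ν i))).eventually
      (p := fun p : ℝ × ℝ => p.1 - p.2 ≤ m) ?_
  filter_upwards [Measure.quasiMeasurePreserving_fst.ae (hν i),
    Measure.quasiMeasurePreserving_snd.ae (hν i)] with p h1 h2
  linarith [abs_le.mp h1, abs_le.mp h2, ham i]

lemma pi_prod_jointTail (ν : Fin n → Measure ℝ) [∀ i, SigmaFinite (ν i)] (α β : ℝ) :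
    Measure.pi (fun i => (ν i).prod (ν i)) (jointTail α β) =
      Measure.pi ν {y | α < ∑ i, y i} * Measure.pi ν {y | β < ∑ i, y i} := by
  have hs : ∀ γ : ℝ, MeasurableSet {y : Fin n → ℝ | γ < ∑ i, y i} := fun γ =>
    measurableSet_lt measurable_const (by fun_prop)
  rw [← Measure.prod_prod,
    ← (measurePreserving_arrowProdEquivProdArrow ℝ ℝ (Fin n) ν ν).measure_preimage
      ((hs α).prod (hs β)).nullMeasurableSet]
  rfl

end Reflection

lemma one_le_two_mul_measure_lt_of_map_neg {Ω : Type*} [MeasurableSpace Ω] {μ : Measure Ω}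
    [IsProbabilityMeasure μ] {Y : Ω → ℝ} (hY : Measurable Y)
    (hsymm : μ.map Y = μ.map (fun ω => -Y ω)) {s : ℝ} (hs : s < 0) :
    1 ≤ 2 * μ {ω | s < Y ω} := by
  have hflip : μ {ω | Y ω ≤ 0} = μ {ω | 0 ≤ Y ω} :=
    calc μ {ω | Y ω ≤ 0} = μ.map (fun ω => -Y ω) (Set.Ici 0) := by
          rw [Measure.map_apply (by fun_prop) measurableSet_Ici]
          congr 1; ext; simp
      _ = μ {ω | 0 ≤ Y ω} := by rw [← hsymm, Measure.map_apply hY measurableSet_Ici]; rfl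
  calc (1 : ENNReal) = μ ({ω | 0 ≤ Y ω} ∪ {ω | Y ω ≤ 0}) := by
        rw [← measure_univ (μ := μ)]; congr 1; ext ω; simp [le_total]
    _ ≤ μ {ω | 0 ≤ Y ω} + μ {ω | Y ω ≤ 0} := measure_union_le _ _
    _ = 2 * μ {ω | 0 ≤ Y ω} := by rw [hflip, two_mul]
    _ ≤ 2 * μ {ω | s < Y ω} := by
        gcongr 2 * μ ?_
        exact fun ω (hω : 0 ≤ Y ω) => hs.trans_le hω

lemma pow_mul_le_pow_of_reflection {G : ℝ → ℝ} (hG : ∀ r, 0 ≤ G r) {s t δ : ℝ}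
    (hδ : 0 ≤ δ)
    (hrefl : ∀ b ≤ t, G s * G b ≤ G (b + δ) * G t) (j : ℕ) :
    G s ^ j * G (t - j * δ) ≤ G t ^ (j + 1) := by
  induction j with
  | zero => simp
  | succ j ih =>
    have hb : t - (j + 1 : ℕ) * δ ≤ t := by
      have : 0 ≤ ((j + 1 : ℕ) : ℝ) * δ := by positivity
      linarith
    have hshift : t - (j + 1 : ℕ) * δ + δ = t - j * δ := by push_cast; ring
    calc G s ^ (j + 1) * G (t - (j + 1 : ℕ) * δ)
        = G s ^ j * (G s * G (t - (j + 1 : ℕ) * δ)) := by ring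
      _ ≤ G s ^ j * (G (t - j * δ) * G t) := by
          rw [← hshift]
          exact mul_le_mul_of_nonneg_left (hrefl _ hb) (pow_nonneg (hG s) j)
      _ = G s ^ j * G (t - j * δ) * G t := by ring
      _ ≤ G t ^ (j + 1) * G t := mul_le_mul_of_nonneg_right ih (hG t)
      _ = G t ^ (j + 1 + 1) := by ring

section Independent

variable {Ω : Type*} [MeasurableSpace Ω] {μ : Measure Ω} {n : ℕ}
  {x : Fin n → Ω → ℝ}

theorem measure_lt_sum_mul_le [IsProbabilityMeasure μ] (hmeas : ∀ i, Measurable (x i))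
    (hindep : iIndepFun x μ) {a : Fin n → ℝ} (hbdd : ∀ i, ∀ᵐ ω ∂μ, |x i ω| ≤ a i) {m : ℝ}
    (ham : ∀ i, 2 * a i ≤ m) (hm : 0 ≤ m) {A B δ : ℝ} (hδ : 0 < δ) (hBA : B ≤ A + m) :
    μ {ω | A + δ + m < ∑ i, x i ω} * μ {ω | B < ∑ i, x i ω} ≤
      μ {ω | B + δ < ∑ i, x i ω} * μ {ω | A < ∑ i, x i ω} := by
  have : ∀ i, IsProbabilityMeasure (μ.map (x i)) := fun i =>
    Measure.isProbabilityMeasure_map (hmeas i).aemeasurable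
  have hlaw : ∀ α β,
      Measure.pi (fun i => (μ.map (x i)).prod (μ.map (x i))) (jointTail α β) =
      μ {ω | α < ∑ i, x i ω} * μ {ω | β < ∑ i, x i ω} := fun α β => by
    rw [pi_prod_jointTail, ← hindep.map_fun_eq_pi_map fun i => (hmeas i).aemeasurable,
      Measure.map_apply (by fun_prop) (measurableSet_lt measurable_const (by fun_prop)),
      Measure.map_apply (by fun_prop) (measurableSet_lt measurable_const (by fun_prop))]
    rfl
  have hν : ∀ i, ∀ᵐ r ∂μ.map (x i), |r| ≤ a i := fun i =>
    (ae_map_iff (hmeas i).aemeasurable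
      (measurableSet_le (by fun_prop) measurable_const)).mpr (hbdd i)
  rw [← hlaw, ← hlaw]
  exact measure_jointTail_le _ (measurePreserving_tailSwap _) hm
    (ae_sub_le_of_ae_abs_le _ hν ham) hδ hBA

lemma map_sum_eq_map_neg_sum (hmeas : ∀ i, Measurable (x i)) (hindep : iIndepFun x μ)
    (hsymm : ∀ i, μ.map (x i) = μ.map (fun ω => -(x i ω))) :
    μ.map (fun ω => ∑ i, x i ω) = μ.map (fun ω => -∑ i, x i ω) := by
  have hvec : μ.map (fun ω i => x i ω) = μ.map (fun ω i => -x i ω) := by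
    have hneg := (hindep.comp (fun _ => Neg.neg) fun _ => measurable_neg).map_fun_eq_pi_map
      fun i => (hmeas i).neg.aemeasurable
    simp only [Pi.neg_apply] at hneg
    rw [hindep.map_fun_eq_pi_map fun i => (hmeas i).aemeasurable, hneg]
    exact congrArg _ (funext hsymm)
  have hsum : Measurable fun y : Fin n → ℝ => ∑ i, y i := by fun_prop
  calc μ.map (fun ω => ∑ i, x i ω)
        = (μ.map (fun ω i => x i ω)).map (fun y => ∑ i, y i) := by
        rw [Measure.map_map hsum (by fun_prop)]; rfl
    _ = (μ.map (fun ω i => -x i ω)).map (fun y => ∑ i, y i) := by rw [hvec]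
    _ = μ.map (fun ω => -∑ i, x i ω) := by
        rw [Measure.map_map hsum (by fun_prop)]
        simp only [Function.comp_def, sum_neg_distrib]

end Independent

theorem log_concave_exp {Ω : Type*} [MeasurableSpace Ω]
    (μ : Measure Ω) [IsProbabilityMeasure μ]
    (n : ℕ) (hn : 0 < n) (x : Fin n → Ω → ℝ) (a : Fin n → ℝ) (m : ℝ)
    (hmeas : ∀ i, Measurable (x i))
    (hindep : iIndepFun x μ)
    (hsymm : ∀ i, μ.map (x i) = μ.map (fun ω => -(x i ω)))
    (hbdd : ∀ i, ∀ᵐ ω ∂μ, |x i ω| ≤ a i)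
    (hm : m = 2 * Finset.univ.sup' ⟨⟨0, hn⟩, Finset.mem_univ _⟩ a)
    (F : ℝ → ℝ) (hF : ∀ r, F r = (μ {ω | r < ∑ i, x i ω}).toReal)
    (t δ : ℝ) (hδ : 0 < δ) :
    F (t + δ + m) ^ (1 + ⌊t / δ⌋₊) ≤ 2 * F t ^ (1 + ⌊t / δ⌋₊ + 1) := by
  have ham : ∀ i, 2 * a i ≤ m := fun i => by rw [hm]; linarith [le_sup' a (mem_univ i)]
  have hm0 : 0 ≤ m := by
    obtain ⟨ω, hω⟩ := (hbdd ⟨0, hn⟩).exists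
    linarith [ham ⟨0, hn⟩, abs_nonneg (x ⟨0, hn⟩ ω)]
  have hF0 : ∀ r, 0 ≤ F r := fun r => (hF r).symm ▸ ENNReal.toReal_nonneg
  have hrefl : ∀ b ≤ t, F (t + δ + m) * F b ≤ F (b + δ) * F t := fun b hb => by
    simp only [hF, ← ENNReal.toReal_mul]
    exact ENNReal.toReal_mono (by finiteness)
      (measure_lt_sum_mul_le hmeas hindep hbdd ham hm0 hδ (by linarith))
  set l := 1 + ⌊t / δ⌋₊
  have hl : t - l * δ < 0 := by
    have := Nat.lt_floor_add_one (t / δ)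
    rw [div_lt_iff₀ hδ] at this
    push_cast [l]
    linarith
  have hhalf : 1 ≤ 2 * F (t - l * δ) := by
    have := one_le_two_mul_measure_lt_of_map_neg (by fun_prop)
      (map_sum_eq_map_neg_sum hmeas hindep hsymm) hl
    rw [hF, ← ENNReal.toReal_ofNat, ← ENNReal.toReal_mul]
    exact ENNReal.toReal_one ▸ ENNReal.toReal_mono (by finiteness) this
  calc F (t + δ + m) ^ l ≤ F (t + δ + m) ^ l * (2 * F (t - l * δ)) :=
        le_mul_of_one_le_right (pow_nonneg (hF0 _) l) hhalf
    _ = 2 * (F (t + δ + m) ^ l * F (t - l * δ)) := by ring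
    _ ≤ 2 * F t ^ (l + 1) := by
        gcongr
        exact pow_mul_le_pow_of_reflection hF0 hδ.le hrefl l
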